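/- The cocycle $x = :\beta\gamma^2: - :bc\gamma: + \frac32\partial\gamma$ is not a BRST coboundary: $x \notin [Q, \mathcal W]$. Hence $x$ represents a nonzero class in $H^{0,1}$ of the semi-infinite Weil complex of the Virasoro algebra. -/

import Mathlib

open scoped BigOperators

/-- Generalized binomial coefficient `m choose j` for an integer `m`, as a complex number. -/
noncomputable def zchoose (m : ℤ) (j : ℕ) : ℂ :=
  (∏ i ∈ Finset.range j, ((m : ℂ) - (i : ℂ))) / (Nat.factorial j : ℂ)

/-- A vertex superalgebra presented via its circle products `∘ₙ`, in the sense of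
Lian-Zuckerman (a commutative quantum operator algebra).  The parity grading is recorded by
the submodules `even`, `odd`; `comm_even`/`comm_odd` encode the Borcherds commutator formula
for the Fourier modes acting on the left regular module, and `iterate_even`/`iterate_odd`
encode the iterate (associativity) formula. -/
structure VA (V : Type) [AddCommGroup V] [Module ℂ V] where
  circ : ℤ → V →ₗ[ℂ] V →ₗ[ℂ] V
  one : V
  even : Submodule ℂ V
  odd : Submodule ℂ V
  one_even : one ∈ even
  circ_ee : ∀ (n : ℤ) {a b : V}, a ∈ even → b ∈ even → circ n a b ∈ even
  circ_oo : ∀ (n : ℤ) {a b : V}, a ∈ odd → b ∈ odd → circ n a b ∈ even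
  circ_eo : ∀ (n : ℤ) {a b : V}, a ∈ even → b ∈ odd → circ n a b ∈ odd
  circ_oe : ∀ (n : ℤ) {a b : V}, a ∈ odd → b ∈ even → circ n a b ∈ odd
  unit_left : ∀ (n : ℤ) (a : V), circ n one a = if n = -1 then a else 0
  unit_right_wick : ∀ a : V, circ (-1) a one = a
  unit_right_nonneg : ∀ (n : ℤ) (a : V), 0 ≤ n → circ n a one = 0
  truncate : ∀ a b : V, ∃ N : ℕ, ∀ n : ℤ, (N : ℤ) ≤ n → circ n a b = 0
  comm_even : ∀ {a b : V}, (a ∈ even ∨ b ∈ even) → ∀ (m n : ℤ) (c : V),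
    circ m a (circ n b c) - circ n b (circ m a c)
      = ∑ᶠ j : ℕ, zchoose m j • circ (m + n - (j : ℤ)) (circ (j : ℤ) a b) c
  comm_odd : ∀ {a b : V}, a ∈ odd → b ∈ odd → ∀ (m n : ℤ) (c : V),
    circ m a (circ n b c) + circ n b (circ m a c)
      = ∑ᶠ j : ℕ, zchoose m j • circ (m + n - (j : ℤ)) (circ (j : ℤ) a b) c
  iterate_even : ∀ {a b : V}, (a ∈ even ∨ b ∈ even) → ∀ (m n : ℤ) (c : V),
    circ m (circ n a b) c
      = ∑ᶠ j : ℕ, ((-1 : ℂ) ^ j * zchoose n j) •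
          (circ (n - (j : ℤ)) a (circ (m + (j : ℤ)) b c)
            - ((-1 : ℂ) ^ n) • circ (n + m - (j : ℤ)) b (circ (j : ℤ) a c))
  iterate_odd : ∀ {a b : V}, a ∈ odd → b ∈ odd → ∀ (m n : ℤ) (c : V),
    circ m (circ n a b) c
      = ∑ᶠ j : ℕ, ((-1 : ℂ) ^ j * zchoose n j) •
          (circ (n - (j : ℤ)) a (circ (m + (j : ℤ)) b c)
            + ((-1 : ℂ) ^ n) • circ (n + m - (j : ℤ)) b (circ (j : ℤ) a c))

namespace VA

variable {V : Type} [AddCommGroup V] [Module ℂ V] (A : VA V)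

/-- The formal derivative `∂a = a ∘₋₂ 1`. -/
def D (a : V) : V := A.circ (-2) a A.one

/-- The Wick (normally ordered) product `:ab: = a ∘₋₁ b`. -/
def wick (a b : V) : V := A.circ (-1) a b

end VA

namespace VA

/-- Iterated (right-normalized) Wick product of a list of elements. -/
def wlist {V : Type} [AddCommGroup V] [Module ℂ V] (A : VA V) : List V → V
  | [] => A.one
  | a :: l => A.wick a (wlist A l)

/-- Iterated Wick power. -/
def wpow {V : Type} [AddCommGroup V] [Module ℂ V] (A : VA V) (a : V) : ℕ → V
  | 0 => A.one
  | k + 1 => A.wick a (wpow A a k)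

end VA

namespace VA

variable {V : Type} [AddCommGroup V] [Module ℂ V]

/-- The standard monomial `:∂^{n₁}b ⋯ ∂^{nᵢ}b ∂^{m₁}c ⋯ ∂^{mⱼ}c ∂^{s₁}β ⋯ ∂^{sₖ}β ∂^{t₁}γ ⋯ ∂^{tₗ}γ:`. -/
def stdMon (A : VA V) (b c β γ : V) (ns ms ss ts : List ℕ) : V :=
  wlist A ((ns.map fun k => A.D^[k] b) ++ (ms.map fun k => A.D^[k] c)
    ++ (ss.map fun k => A.D^[k] β) ++ (ts.map fun k => A.D^[k] γ))

/-- The set of all standard monomials. -/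
def StdSet (A : VA V) (b c β γ : V) : Set V :=
  {v | ∃ ns ms ss ts : List ℕ,
    List.Chain' (· > ·) ns ∧ List.Chain' (· > ·) ms ∧
    List.Chain' (· ≥ ·) ss ∧ List.Chain' (· ≥ ·) ts ∧
    v = stdMon A b c β γ ns ms ss ts}

/-- The set of standard monomials containing at least one derivative. -/
def DSet (A : VA V) (b c β γ : V) : Set V :=
  {v | ∃ ns ms ss ts : List ℕ,
    List.Chain' (· > ·) ns ∧ List.Chain' (· > ·) ms ∧
    List.Chain' (· ≥ ·) ss ∧ List.Chain' (· ≥ ·) ts ∧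
    (∃ k ∈ ns ++ ms ++ ss ++ ts, 0 < k) ∧
    v = stdMon A b c β γ ns ms ss ts}

end VA


/-!
Let `T = K₍₀₎ + L₍₁₎` with `K = :βγ: - 2 :bc:` and `L` the total Virasoro field. By the
commutator formula, `T` is additive on Wick products and `T ∂a = ∂(T a) + ∂a` whenever
`L₍₀₎ a = ∂a`; the generators `b, c, β, γ` have `T`-weights `0, 1, 1, 0`, so every standard
monomial is a `T`-eigenvector with eigenvalue in `ℕ`. The current `J` has weight `3`, so
`Q = J₍₀₎` raises weights by `2` and its image lies in the eigenspaces of weight `≥ 2`. But `x`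
has weight `1`, and `x ≠ 0` since `β₍₁₎ x = 3/2`.
-/

theorem zchoose_zero_right (m : ℤ) : zchoose m 0 = 1 := by
  simp [zchoose]

theorem zchoose_one_right (m : ℤ) : zchoose m 1 = m := by
  simp [zchoose]

theorem zchoose_natCast_of_lt {m j : ℕ} (h : m < j) : zchoose m j = 0 := by
  rw [zchoose, Finset.prod_eq_zero (Finset.mem_range.2 h) (by simp), zero_div]

theorem neg_one_pow_mul_zchoose_neg_one (j : ℕ) : (-1 : ℂ) ^ j * zchoose (-1) j = 1 := by
  have hprod : ∏ i ∈ Finset.range j, ((-1 : ℂ) - i) = (-1) ^ j * j.factorial := by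
    induction j with
    | zero => simp
    | succ n ih => rw [Finset.prod_range_succ, ih, Nat.factorial_succ]; push_cast; ring
  rw [zchoose, Int.cast_neg, Int.cast_one, hprod, mul_div_assoc,
    div_self (by exact_mod_cast j.factorial_ne_zero), mul_one, ← mul_pow]
  norm_num

theorem neg_one_pow_mul_zchoose_neg_two (j : ℕ) : (-1 : ℂ) ^ j * zchoose (-2) j = j + 1 := by
  have hprod : ∏ i ∈ Finset.range j, ((-2 : ℂ) - i) = (-1) ^ j * (j + 1).factorial := by
    induction j with
    | zero => simp
    | succ n ih => rw [Finset.prod_range_succ, ih, Nat.factorial_succ (n + 1)]; push_cast; ring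
  rw [zchoose, show ((-2 : ℤ) : ℂ) = -2 by norm_num, hprod, Nat.factorial_succ, Nat.cast_mul,
    ← mul_assoc, mul_div_assoc, div_self (by exact_mod_cast j.factorial_ne_zero), mul_one,
    ← mul_assoc, ← mul_pow]
  norm_num

theorem finsum_eq_apply_zero_add_apply_one {M : Type*} [AddCommMonoid M] {f : ℕ → M}
    (h : ∀ j, 2 ≤ j → f j = 0) : ∑ᶠ j, f j = f 0 + f 1 := by
  rw [finsum_eq_sum_of_support_subset f (s := {0, 1}) fun j hj => by
    by_contra hj'
    simp only [Finset.coe_insert, Finset.coe_singleton, Set.mem_insert_iff,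
      Set.mem_singleton_iff, not_or] at hj'
    exact hj (h j (by omega))]
  simp

theorem Module.End.eq_zero_of_mem_eigenspace_of_mem_iSup {K M ι : Type*} [Field K]
    [AddCommGroup M] [Module K M] {T : Module.End K M} {μ : K} {f : ι → K} (hf : ∀ i, f i ≠ μ)
    {x : M} (hx : x ∈ T.eigenspace μ) (hx' : x ∈ ⨆ i, T.eigenspace (f i)) : x = 0 := by
  have hdisj := T.eigenspaces_iSupIndep.disjoint_biSup (y := Set.range f)
    (by rintro ⟨i, hi⟩; exact hf i hi)
  rw [iSup_range] at hdisj
  exact Submodule.disjoint_def.1 hdisj x hx hx'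

namespace VA

variable {V : Type} [AddCommGroup V] [Module ℂ V] (A : VA V)

@[simp] theorem circ_neg_one_one (a : V) : A.circ (-1) a A.one = a := A.unit_right_wick a

@[simp] theorem circ_neg_two_one (a : V) : A.circ (-2) a A.one = A.D a := rfl

@[simp] theorem circ_natCast_one (n : ℕ) (a : V) : A.circ n a A.one = 0 :=
  A.unit_right_nonneg n a n.cast_nonneg

@[simp] theorem D_one : A.D A.one = 0 := by
  rw [D, A.unit_left, if_neg (by norm_num)]

theorem D_add (a a' : V) : A.D (a + a') = A.D a + A.D a' := by
  simp only [D, map_add, LinearMap.add_apply]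

theorem D_smul (t : ℂ) (a : V) : A.D (t • a) = t • A.D a := by
  simp only [D, map_smul, LinearMap.smul_apply]

theorem circ_D (m : ℤ) (a z : V) : A.circ m (A.D a) z = (-(m : ℂ)) • A.circ (m - 1) a z := by
  rw [D, A.iterate_even (Or.inr A.one_even)]
  simp only [neg_one_pow_mul_zchoose_neg_two, show ((-1 : ℂ) ^ (-2 : ℤ)) = 1 by norm_num,
    one_smul, A.unit_left, apply_ite (A.circ _ a), map_zero]
  rcases lt_or_ge m 0 with hm | hm
  · obtain ⟨k, hk⟩ : ∃ k : ℕ, (k : ℤ) = -1 - m := ⟨_, Int.toNat_of_nonneg (by omega)⟩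
    rw [finsum_eq_single _ k fun j hj => by rw [if_neg (by omega), if_neg (by omega)]; simp,
      if_pos (by omega), if_neg (by omega), sub_zero, show -2 - (k : ℤ) = m - 1 by omega,
      show (k : ℂ) + 1 = -m by rw [← Int.cast_natCast, hk]; push_cast; ring]
  rcases hm.eq_or_lt with rfl | hm
  · rw [finsum_eq_zero_of_forall_eq_zero fun j => by
      rw [if_neg (by omega), if_neg (by omega)]; simp]
    simp
  · obtain ⟨k, hk⟩ : ∃ k : ℕ, (k : ℤ) = m - 1 := ⟨_, Int.toNat_of_nonneg (by omega)⟩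
    rw [finsum_eq_single _ k fun j hj => by rw [if_neg (by omega), if_neg (by omega)]; simp,
      if_neg (by omega), if_pos (by omega), zero_sub, smul_neg, ← neg_smul, ← hk,
      show (k : ℂ) + 1 = m by rw [← Int.cast_natCast, hk]; push_cast; ring]

/-- `ε = (-1) ^ (|a| |z|)`, for `a` and `z` of definite parity. -/
def KoszulSign (a z : V) (ε : ℂ) : Prop :=
  (ε = 1 ∧ (a ∈ A.even ∨ z ∈ A.even)) ∨ (ε = -1 ∧ a ∈ A.odd ∧ z ∈ A.odd)

def IsHomogeneous (a : V) : Prop := a ∈ A.even ∨ a ∈ A.odd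

variable {A}

theorem IsHomogeneous.exists_koszulSign {a z : V} (ha : A.IsHomogeneous a)
    (hz : A.IsHomogeneous z) : ∃ ε, A.KoszulSign a z ε := by
  rcases ha with ha | ha
  · exact ⟨1, .inl ⟨rfl, .inl ha⟩⟩
  rcases hz with hz | hz
  · exact ⟨1, .inl ⟨rfl, .inr hz⟩⟩
  · exact ⟨-1, .inr ⟨rfl, ha, hz⟩⟩

theorem IsHomogeneous.circ {a z : V} (ha : A.IsHomogeneous a) (hz : A.IsHomogeneous z) (n : ℤ) :
    A.IsHomogeneous (A.circ n a z) := by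
  rcases ha with ha | ha <;> rcases hz with hz | hz
  exacts [.inl (A.circ_ee n ha hz), .inr (A.circ_eo n ha hz), .inr (A.circ_oe n ha hz),
    .inl (A.circ_oo n ha hz)]

variable (A)

theorem isHomogeneous_one : A.IsHomogeneous A.one := .inl A.one_even

theorem circ_wick {a z : V} {ε : ℂ} (h : A.KoszulSign a z ε) (m : ℤ) (g : V) :
    A.circ m (A.wick a z) g = ∑ᶠ j : ℕ,
      (A.circ (-1 - j) a (A.circ (m + j) z g) + ε • A.circ (-1 + m - j) z (A.circ j a g)) := by
  rcases h with ⟨rfl, h⟩ | ⟨rfl, ha, hz⟩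
  · simp only [wick, A.iterate_even h, neg_one_pow_mul_zchoose_neg_one, one_smul, zpow_neg_one,
      inv_neg, inv_one, neg_smul, sub_neg_eq_add]
  · simp only [wick, A.iterate_odd ha hz, neg_one_pow_mul_zchoose_neg_one, one_smul, zpow_neg_one,
      inv_neg, inv_one]

theorem D_circ {a z : V} {ε : ℂ} (h : A.KoszulSign a z ε) (n : ℤ) :
    A.D (A.circ n a z) = A.circ n (A.D a) z + A.circ n a (A.D z) := by
  have hsum : ∀ s : ℂ, ∑ᶠ j : ℕ, ((-1 : ℂ) ^ j * zchoose n j) •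
      (A.circ (n - j) a (A.circ (-2 + j) z A.one) + s • A.circ (n + -2 - j) z (A.circ j a A.one))
      = A.circ n (A.D a) z + A.circ n a (A.D z) := by
    intro s
    rw [finsum_eq_apply_zero_add_apply_one fun j hj => by
      rw [A.unit_right_nonneg _ _ (by omega)]; simp]
    simp [zchoose_zero_right, zchoose_one_right, A.circ_D, A.unit_right_nonneg]
    abel
  rcases h with ⟨-, h⟩ | ⟨-, ha, hz⟩
  · rw [D, A.iterate_even h]
    simp only [sub_eq_add_neg, ← neg_smul]
    exact hsum _
  · exact (A.iterate_odd ha hz (-2) n A.one).trans (hsum _)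

theorem circ_zero_circ {F : V} (hF : F ∈ A.even) (n : ℤ) (a z : V) :
    A.circ 0 F (A.circ n a z) = A.circ n a (A.circ 0 F z) + A.circ n (A.circ 0 F a) z := by
  have h := A.comm_even (.inl hF) 0 n z (a := F) (b := a)
  rw [finsum_eq_single _ 0 fun j hj => by
    rw [show (0 : ℤ) = ((0 : ℕ) : ℤ) from rfl, zchoose_natCast_of_lt (by omega), zero_smul]] at h
  rw [sub_eq_iff_eq_add] at h
  simpa [zchoose_zero_right, add_comm] using h

theorem circ_one_circ {F : V} (hF : F ∈ A.even) (n : ℤ) (a z : V) :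
    A.circ 1 F (A.circ n a z) = A.circ n a (A.circ 1 F z) + A.circ (1 + n) (A.circ 0 F a) z
      + A.circ n (A.circ 1 F a) z := by
  have h := A.comm_even (.inl hF) 1 n z (a := F) (b := a)
  rw [finsum_eq_apply_zero_add_apply_one fun j hj => by
    rw [show (1 : ℤ) = ((1 : ℕ) : ℤ) from rfl, zchoose_natCast_of_lt (by omega), zero_smul]] at h
  rw [sub_eq_iff_eq_add] at h
  simp [zchoose_zero_right, zchoose_one_right] at h
  rw [h]; abel

theorem circ_one_wick {F : V} (hF : F ∈ A.even) (a z : V) :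
    A.circ 1 F (A.wick a z)
      = A.wick a (A.circ 1 F z) + A.circ 0 (A.circ 0 F a) z + A.wick (A.circ 1 F a) z := by
  simpa [wick] using A.circ_one_circ hF (-1) a z

/-- `L₍₁₎` is the mode `L₀` in the usual Virasoro notation. -/
def weightOp (K L : V) : Module.End ℂ V := A.circ 0 K + A.circ 1 L

structure IsWeightVector (K L a : V) (w : ℂ) : Prop where
  circ_zero : A.circ 0 L a = A.D a
  weightOp_apply : A.weightOp K L a = w • a

section weight

variable {A} {K L : V}

theorem isWeightVector_one : A.IsWeightVector K L A.one 0 :=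
  ⟨by simp [A.unit_right_nonneg], by simp [weightOp, A.unit_right_nonneg]⟩

theorem IsWeightVector.add {a a' : V} {w : ℂ} (h : A.IsWeightVector K L a w)
    (h' : A.IsWeightVector K L a' w) : A.IsWeightVector K L (a + a') w :=
  ⟨by rw [map_add, h.circ_zero, h'.circ_zero, A.D_add],
    by rw [map_add, h.weightOp_apply, h'.weightOp_apply, smul_add]⟩

theorem IsWeightVector.smul {a : V} {w : ℂ} (h : A.IsWeightVector K L a w) (t : ℂ) :
    A.IsWeightVector K L (t • a) w :=
  ⟨by rw [map_smul, h.circ_zero, A.D_smul],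
    by rw [map_smul, h.weightOp_apply, smul_comm]⟩

theorem IsWeightVector.neg {a : V} {w : ℂ} (h : A.IsWeightVector K L a w) :
    A.IsWeightVector K L (-a) w := by
  simpa using h.smul (-1)

theorem IsWeightVector.sub {a a' : V} {w : ℂ} (h : A.IsWeightVector K L a w)
    (h' : A.IsWeightVector K L a' w) : A.IsWeightVector K L (a - a') w := by
  simpa [sub_eq_add_neg] using h.add h'.neg

variable (hK : K ∈ A.even) (hL : L ∈ A.even)
include hK hL

theorem weightOp_circ {a z : V} {wa wz : ℂ} (ha : A.circ 0 L a = A.D a)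
    (hTa : A.weightOp K L a = wa • a) (hTz : A.weightOp K L z = wz • z) (n : ℤ) :
    A.weightOp K L (A.circ n a z) = (wa + wz - n - 1) • A.circ n a z := by
  have hsplit : ∀ v, A.weightOp K L v = A.circ 0 K v + A.circ 1 L v := fun _ => rfl
  rw [hsplit, A.circ_zero_circ hK, A.circ_one_circ hL, ha, A.circ_D, add_sub_cancel_left]
  -- the shift `-n - 1` comes from `(L₍₀₎ a)₍₁₊ₙ₎ = (∂a)₍₁₊ₙ₎ = -(n + 1) a₍ₙ₎`
  calc _ = A.circ n a (A.weightOp K L z) + A.circ n (A.weightOp K L a) z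
        - ((n : ℂ) + 1) • A.circ n a z := by
          simp only [hsplit, map_add, LinearMap.add_apply]; module
    _ = _ := by rw [hTa, hTz]; simp only [map_smul, LinearMap.smul_apply]; module

theorem IsWeightVector.circ {a z : V} {wa wz ε : ℂ} (ha : A.IsWeightVector K L a wa)
    (hz : A.IsWeightVector K L z wz) (haz : A.KoszulSign a z ε) (n : ℤ) :
    A.IsWeightVector K L (A.circ n a z) (wa + wz - n - 1) :=
  ⟨by rw [A.circ_zero_circ hL, ha.circ_zero, hz.circ_zero, A.D_circ haz, add_comm],
    weightOp_circ hK hL ha.circ_zero ha.weightOp_apply hz.weightOp_apply n⟩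

theorem IsWeightVector.wick {a z : V} {wa wz ε : ℂ} (ha : A.IsWeightVector K L a wa)
    (hz : A.IsWeightVector K L z wz) (haz : A.KoszulSign a z ε) :
    A.IsWeightVector K L (A.wick a z) (wa + wz) := by
  simpa [VA.wick] using ha.circ hK hL hz haz (-1)

theorem IsWeightVector.D {a : V} {wa : ℂ} (ha : A.IsWeightVector K L a wa)
    (ha' : A.IsHomogeneous a) : A.IsWeightVector K L (A.D a) (wa + 1) := by
  obtain ⟨ε, hε⟩ := ha'.exists_koszulSign A.isHomogeneous_one
  have h := ha.circ hK hL isWeightVector_one hε (-2)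
  rwa [show wa + 0 - ((-2 : ℤ) : ℂ) - 1 = wa + 1 by push_cast; ring] at h

theorem IsWeightVector.circ_zero_mem_eigenspace {J v : V} {wJ w : ℂ}
    (hJ : A.IsWeightVector K L J wJ) (hv : v ∈ (A.weightOp K L).eigenspace w) :
    A.circ 0 J v ∈ (A.weightOp K L).eigenspace (wJ + w - 1) := by
  rw [Module.End.mem_eigenspace_iff] at hv ⊢
  simpa using weightOp_circ hK hL hJ.circ_zero hJ.weightOp_apply hv 0

omit hK hL in
theorem IsWeightVector.mem_eigenspace {a : V} {w : ℂ} (h : A.IsWeightVector K L a w) :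
    a ∈ (A.weightOp K L).eigenspace w :=
  Module.End.mem_eigenspace_iff.2 h.weightOp_apply

end weight

def HasNatWeight (K L a : V) : Prop := A.IsHomogeneous a ∧ ∃ k : ℕ, A.IsWeightVector K L a k

section natWeight

variable {A} {K L : V} (hK : K ∈ A.even) (hL : L ∈ A.even)
include hK hL

theorem HasNatWeight.wick {a z : V} (ha : A.HasNatWeight K L a) (hz : A.HasNatWeight K L z) :
    A.HasNatWeight K L (A.wick a z) := by
  obtain ⟨ha', k, hk⟩ := ha
  obtain ⟨hz', l, hl⟩ := hz
  obtain ⟨ε, hε⟩ := ha'.exists_koszulSign hz'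
  exact ⟨ha'.circ hz' _, k + l, by simpa using hk.wick hK hL hl hε⟩

theorem HasNatWeight.iterate_D {a : V} (ha : A.HasNatWeight K L a) (n : ℕ) :
    A.HasNatWeight K L (A.D^[n] a) := by
  induction n with
  | zero => exact ha
  | succ n ih =>
    obtain ⟨h', k, hk⟩ := ih
    rw [Function.iterate_succ_apply']
    exact ⟨h'.circ A.isHomogeneous_one _, k + 1, by simpa using hk.D hK hL h'⟩

theorem hasNatWeight_wlist {l : List V} (hl : ∀ a ∈ l, A.HasNatWeight K L a) :
    A.HasNatWeight K L (A.wlist l) := by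
  induction l with
  | nil => exact ⟨A.isHomogeneous_one, 0, by simpa [wlist] using isWeightVector_one⟩
  | cons a l ih =>
    exact (hl a (List.mem_cons_self ..)).wick hK hL
      (ih fun x hx => hl x (List.mem_cons_of_mem _ hx))

end natWeight

/-- The OPE `a(z) g(w) ∼ κ (z - w) ^ (-p - 1)`. -/
def HasSinglePole (a g : V) (p : ℕ) (κ : ℂ) : Prop :=
  ∀ n : ℕ, A.circ n a g = if n = p then κ • A.one else 0

section singlePole

variable {A} {a g : V} {p : ℕ} {κ : ℂ}

theorem HasSinglePole.of_residue (h0 : A.circ 0 a g = κ • A.one)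
    (h : ∀ n : ℤ, 1 ≤ n → A.circ n a g = 0) : A.HasSinglePole a g 0 κ := by
  rintro (_ | n)
  · exact h0
  · exact h _ (by omega)

theorem HasSinglePole.of_forall_eq_zero (h : ∀ n : ℤ, 0 ≤ n → A.circ n a g = 0) :
    A.HasSinglePole a g 0 0 := fun n => by simp [h n n.cast_nonneg]

theorem HasSinglePole.circ_zero (h : A.HasSinglePole a g 0 κ) : A.circ 0 a g = κ • A.one := by
  simpa using h 0

theorem HasSinglePole.circ_one (h : A.HasSinglePole a g 0 κ) : A.circ 1 a g = 0 := by
  simpa using h 1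

theorem HasSinglePole.D (h : A.HasSinglePole a g p κ) :
    A.HasSinglePole (A.D a) g (p + 1) (-((p : ℂ) + 1) * κ) := by
  rintro (_ | n)
  · simp [A.circ_D]
  · rw [Nat.cast_succ, A.circ_D, add_sub_cancel_right, h n]
    split_ifs <;> simp_all [mul_smul]

theorem circ_wick_of_hasSinglePole {z : V} {q : ℕ} {ε κz : ℂ} (h : A.KoszulSign a z ε)
    (ha : A.HasSinglePole a g p κ) (hz : A.HasSinglePole z g q κz) {m : ℤ} (hm : 0 ≤ m) :
    A.circ m (A.wick a z) g
      = κz • A.circ (m - 1 - q) a A.one + (ε * κ) • A.circ (-1 + m - p) z A.one := by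
  lift m to ℕ using hm
  have hu : ∀ j : ℕ, A.circ (-1 - j) a (A.circ (m + j) z g)
      = if j = q - m ∧ m ≤ q then κz • A.circ (m - 1 - q) a A.one else 0 := by
    intro j
    rw [← Nat.cast_add, hz]
    by_cases hj : m + j = q
    · rw [if_pos hj, if_pos (by omega), map_smul, show -1 - (j : ℤ) = m - 1 - q by omega]
    · rw [if_neg hj, if_neg (by omega), map_zero]
  have hv : ∀ j : ℕ, ε • A.circ (-1 + m - j) z (A.circ j a g)
      = if j = p then (ε * κ) • A.circ (-1 + m - p) z A.one else 0 := by
    intro j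
    rw [ha]
    split_ifs with hj <;> simp [hj, mul_smul]
  simp_rw [A.circ_wick h, hu, hv]
  rw [finsum_add_distrib ((Set.finite_singleton (q - m)).subset fun j hj => by
      by_contra hj'; exact hj (if_neg fun h => hj' h.1))
    ((Set.finite_singleton p).subset fun j hj => by by_contra hj'; exact hj (if_neg hj')),
    finsum_eq_single _ (q - m) fun j hj => if_neg fun h => hj h.1,
    finsum_eq_single _ p fun j hj => if_neg hj, if_pos rfl]
  by_cases hmq : m ≤ q
  · rw [if_pos ⟨rfl, hmq⟩]
  · rw [if_neg fun h => hmq h.2, A.unit_right_nonneg (m - 1 - q) _ (by omega), smul_zero]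

end singlePole

def bcVirasoro (b c : V) : V := -A.wick (A.D b) c - (2 : ℂ) • A.wick b (A.D c)

def βγVirasoro (β γ : V) : V := A.wick (A.D β) γ + (2 : ℂ) • A.wick β (A.D γ)

def ghostVirasoro (b c β γ : V) : V := A.bcVirasoro b c + A.βγVirasoro β γ

noncomputable def brstCurrent (b c β γ : V) : V :=
  A.wick (A.βγVirasoro β γ + (1 / 2 : ℂ) • A.bcVirasoro b c) c + (3 / 4 : ℂ) • A.D (A.D c)

def ghostGradingField (b c β γ : V) : V := A.wick β γ - (2 : ℂ) • A.wick b c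

/-- The field `u_g` records the action of the nonnegative modes of `u` on `g`. -/
structure IsGhostSystem (b c β γ : V) : Prop where
  b_odd : b ∈ A.odd
  c_odd : c ∈ A.odd
  β_even : β ∈ A.even
  γ_even : γ ∈ A.even
  b_b : A.HasSinglePole b b 0 0
  c_b : A.HasSinglePole c b 0 1
  β_b : A.HasSinglePole β b 0 0
  γ_b : A.HasSinglePole γ b 0 0
  b_c : A.HasSinglePole b c 0 1
  c_c : A.HasSinglePole c c 0 0
  β_c : A.HasSinglePole β c 0 0
  γ_c : A.HasSinglePole γ c 0 0
  b_β : A.HasSinglePole b β 0 0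
  c_β : A.HasSinglePole c β 0 0
  β_β : A.HasSinglePole β β 0 0
  γ_β : A.HasSinglePole γ β 0 (-1)
  b_γ : A.HasSinglePole b γ 0 0
  c_γ : A.HasSinglePole c γ 0 0
  β_γ : A.HasSinglePole β γ 0 1
  γ_γ : A.HasSinglePole γ γ 0 0

namespace IsGhostSystem

variable {A} {b c β γ : V} (S : A.IsGhostSystem b c β γ)
include S

local notation "𝒦" => A.ghostGradingField b c β γ
local notation "ℒ" => A.ghostVirasoro b c β γ

theorem D_b_odd : A.D b ∈ A.odd := A.circ_oe _ S.b_odd A.one_even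

theorem D_c_odd : A.D c ∈ A.odd := A.circ_oe _ S.c_odd A.one_even

theorem D_β_even : A.D β ∈ A.even := A.circ_ee _ S.β_even A.one_even

theorem circ_zero_ghostVirasoro {g : V} {κb κc κβ κγ : ℂ} (hb : A.HasSinglePole b g 0 κb)
    (hc : A.HasSinglePole c g 0 κc) (hβ : A.HasSinglePole β g 0 κβ)
    (hγ : A.HasSinglePole γ g 0 κγ) :
    A.circ 0 ℒ g = κc • A.D b + κb • A.D c + κβ • A.D γ - κγ • A.D β := by
  simp only [ghostVirasoro, bcVirasoro, βγVirasoro, map_add, map_sub, map_neg, map_smul,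
    LinearMap.add_apply, LinearMap.sub_apply, LinearMap.neg_apply, LinearMap.smul_apply]
  rw [circ_wick_of_hasSinglePole (.inr ⟨rfl, S.D_b_odd, S.c_odd⟩) hb.D hc le_rfl,
    circ_wick_of_hasSinglePole (.inr ⟨rfl, S.b_odd, S.D_c_odd⟩) hb hc.D le_rfl,
    circ_wick_of_hasSinglePole (.inl ⟨rfl, .inl S.D_β_even⟩) hβ.D hγ le_rfl,
    circ_wick_of_hasSinglePole (.inl ⟨rfl, .inl S.β_even⟩) hβ hγ.D le_rfl]
  norm_num
  module

theorem weightOp_apply {g : V} {κb κc κβ κγ : ℂ} (hb : A.HasSinglePole b g 0 κb)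
    (hc : A.HasSinglePole c g 0 κc) (hβ : A.HasSinglePole β g 0 κβ)
    (hγ : A.HasSinglePole γ g 0 κγ) :
    A.weightOp 𝒦 ℒ g = κb • c - κγ • β := by
  simp only [weightOp, ghostGradingField, ghostVirasoro, bcVirasoro, βγVirasoro, map_add,
    map_sub, map_neg, map_smul, LinearMap.add_apply, LinearMap.sub_apply, LinearMap.neg_apply,
    LinearMap.smul_apply]
  rw [circ_wick_of_hasSinglePole (.inl ⟨rfl, .inl S.β_even⟩) hβ hγ le_rfl,
    circ_wick_of_hasSinglePole (.inr ⟨rfl, S.b_odd, S.c_odd⟩) hb hc le_rfl,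
    circ_wick_of_hasSinglePole (.inr ⟨rfl, S.D_b_odd, S.c_odd⟩) hb.D hc zero_le_one,
    circ_wick_of_hasSinglePole (.inr ⟨rfl, S.b_odd, S.D_c_odd⟩) hb hc.D zero_le_one,
    circ_wick_of_hasSinglePole (.inl ⟨rfl, .inl S.D_β_even⟩) hβ.D hγ zero_le_one,
    circ_wick_of_hasSinglePole (.inl ⟨rfl, .inl S.β_even⟩) hβ hγ.D zero_le_one]
  norm_num [A.unit_right_nonneg]
  module

theorem ghostGradingField_mem_even : 𝒦 ∈ A.even :=
  sub_mem (A.circ_ee _ S.β_even S.γ_even) (Submodule.smul_mem _ _ (A.circ_oo _ S.b_odd S.c_odd))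

theorem bcVirasoro_mem_even : A.bcVirasoro b c ∈ A.even :=
  sub_mem (neg_mem (A.circ_oo _ S.D_b_odd S.c_odd))
    (Submodule.smul_mem _ _ (A.circ_oo _ S.b_odd S.D_c_odd))

theorem βγVirasoro_mem_even : A.βγVirasoro β γ ∈ A.even :=
  add_mem (A.circ_ee _ S.D_β_even S.γ_even)
    (Submodule.smul_mem _ _ (A.circ_ee _ S.β_even (A.circ_ee _ S.γ_even A.one_even)))

theorem ghostVirasoro_mem_even : ℒ ∈ A.even :=
  add_mem S.bcVirasoro_mem_even S.βγVirasoro_mem_even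

theorem isWeightVector_b : A.IsWeightVector 𝒦 ℒ b 0 :=
  ⟨by simp [S.circ_zero_ghostVirasoro S.b_b S.c_b S.β_b S.γ_b],
    by simp [S.weightOp_apply S.b_b S.c_b S.β_b S.γ_b]⟩

theorem isWeightVector_c : A.IsWeightVector 𝒦 ℒ c 1 :=
  ⟨by simp [S.circ_zero_ghostVirasoro S.b_c S.c_c S.β_c S.γ_c],
    by simp [S.weightOp_apply S.b_c S.c_c S.β_c S.γ_c]⟩

theorem isWeightVector_β : A.IsWeightVector 𝒦 ℒ β 1 :=
  ⟨by simp [S.circ_zero_ghostVirasoro S.b_β S.c_β S.β_β S.γ_β],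
    by simp [S.weightOp_apply S.b_β S.c_β S.β_β S.γ_β]⟩

theorem isWeightVector_γ : A.IsWeightVector 𝒦 ℒ γ 0 :=
  ⟨by simp [S.circ_zero_ghostVirasoro S.b_γ S.c_γ S.β_γ S.γ_γ],
    by simp [S.weightOp_apply S.b_γ S.c_γ S.β_γ S.γ_γ]⟩

theorem hasNatWeight_of_mem_stdSet {v : V} (hv : v ∈ StdSet A b c β γ) :
    A.HasNatWeight 𝒦 ℒ v := by
  have hK := S.ghostGradingField_mem_even
  have hL := S.ghostVirasoro_mem_even
  obtain ⟨ns, ms, ss, ts, -, -, -, -, rfl⟩ := hv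
  refine hasNatWeight_wlist hK hL fun a ha => ?_
  simp only [List.mem_append, List.mem_map] at ha
  rcases ha with ((⟨n, -, rfl⟩ | ⟨n, -, rfl⟩) | ⟨n, -, rfl⟩) | ⟨n, -, rfl⟩
  · exact HasNatWeight.iterate_D hK hL ⟨.inr S.b_odd, 0, by simpa using S.isWeightVector_b⟩ n
  · exact HasNatWeight.iterate_D hK hL ⟨.inr S.c_odd, 1, by simpa using S.isWeightVector_c⟩ n
  · exact HasNatWeight.iterate_D hK hL ⟨.inl S.β_even, 1, by simpa using S.isWeightVector_β⟩ n
  · exact HasNatWeight.iterate_D hK hL ⟨.inl S.γ_even, 0, by simpa using S.isWeightVector_γ⟩ n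

theorem isWeightVector_brstCurrent : A.IsWeightVector 𝒦 ℒ (A.brstCurrent b c β γ) 3 := by
  have hK := S.ghostGradingField_mem_even
  have hL := S.ghostVirasoro_mem_even
  have hDc := S.isWeightVector_c.D hK hL (.inr S.c_odd)
  have hβγ : A.IsWeightVector 𝒦 ℒ (A.βγVirasoro β γ) 2 := by
    have h1 := (S.isWeightVector_β.D hK hL (.inl S.β_even)).wick hK hL S.isWeightVector_γ
      (.inl ⟨rfl, .inl S.D_β_even⟩)
    have h2 := S.isWeightVector_β.wick hK hL (S.isWeightVector_γ.D hK hL (.inl S.γ_even))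
      (.inl ⟨rfl, .inl S.β_even⟩)
    norm_num at h1 h2
    exact h1.add (h2.smul 2)
  have hbc : A.IsWeightVector 𝒦 ℒ (A.bcVirasoro b c) 2 := by
    have h1 := (S.isWeightVector_b.D hK hL (.inr S.b_odd)).wick hK hL S.isWeightVector_c
      (.inr ⟨rfl, S.D_b_odd, S.c_odd⟩)
    have h2 := S.isWeightVector_b.wick hK hL hDc (.inr ⟨rfl, S.b_odd, S.D_c_odd⟩)
    norm_num at h1 h2
    exact h1.neg.sub (h2.smul 2)
  have h1 := (hβγ.add (hbc.smul (1 / 2))).wick hK hL S.isWeightVector_c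
    (.inl ⟨rfl, .inl (add_mem S.βγVirasoro_mem_even
      (Submodule.smul_mem _ _ S.bcVirasoro_mem_even))⟩)
  have h2 := hDc.D hK hL (.inr S.D_c_odd)
  norm_num at h1 h2
  exact h1.add (h2.smul _)

theorem isWeightVector_cocycle : A.IsWeightVector 𝒦 ℒ
    (A.wick β (A.wick γ γ) - A.wick b (A.wick c γ) + (3 / 2 : ℂ) • A.D γ) 1 := by
  have hK := S.ghostGradingField_mem_even
  have hL := S.ghostVirasoro_mem_even
  have hγγ := S.isWeightVector_γ.wick hK hL S.isWeightVector_γ (.inl ⟨rfl, .inl S.γ_even⟩)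
  have h1 := S.isWeightVector_β.wick hK hL hγγ (.inl ⟨rfl, .inl S.β_even⟩)
  have h2 := S.isWeightVector_b.wick hK hL
    (S.isWeightVector_c.wick hK hL S.isWeightVector_γ (.inl ⟨rfl, .inr S.γ_even⟩))
    (.inr ⟨rfl, S.b_odd, A.circ_oe _ S.c_odd S.γ_even⟩)
  have h3 := S.isWeightVector_γ.D hK hL (.inl S.γ_even)
  norm_num at h1 h2 h3
  exact (h1.sub h2).add (h3.smul _)

theorem circ_one_β_cocycle :
    A.circ 1 β (A.wick β (A.wick γ γ) - A.wick b (A.wick c γ) + (3 / 2 : ℂ) • A.D γ)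
      = (3 / 2 : ℂ) • A.one := by
  have hγγ : A.circ 1 β (A.wick γ γ) = 0 := by
    rw [A.circ_one_wick S.β_even, S.β_γ.circ_one, S.β_γ.circ_zero]
    simp [wick, A.unit_left]
  have hcγ : A.circ 1 β (A.wick c γ) = 0 := by
    rw [A.circ_one_wick S.β_even, S.β_γ.circ_one, S.β_c.circ_zero, S.β_c.circ_one]
    simp [wick]
  have hDγ : A.circ 1 β (A.D γ) = A.one := by
    rw [D, A.circ_one_circ S.β_even, S.β_γ.circ_zero, S.β_γ.circ_one]
    simp [A.unit_left, A.unit_right_nonneg]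
  rw [map_add, map_sub, map_smul, A.circ_one_wick S.β_even β, A.circ_one_wick S.β_even b, hγγ, hcγ,
    hDγ, S.β_β.circ_zero, S.β_β.circ_one, S.β_b.circ_zero, S.β_b.circ_one]
  simp [wick]

theorem circ_zero_brstCurrent_ne (hspan : Submodule.span ℂ (StdSet A b c β γ) = ⊤)
    (hone : A.one ≠ 0) (v : V) :
    A.circ 0 (A.brstCurrent b c β γ) v
      ≠ A.wick β (A.wick γ γ) - A.wick b (A.wick c γ) + (3 / 2 : ℂ) • A.D γ := by
  intro hx
  have hK := S.ghostGradingField_mem_even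
  have hL := S.ghostVirasoro_mem_even
  have hv : v ∈ ⨆ k : ℕ, (A.weightOp 𝒦 ℒ).eigenspace k := by
    have htop : ⊤ ≤ ⨆ k : ℕ, (A.weightOp 𝒦 ℒ).eigenspace k := hspan ▸ Submodule.span_le.2
      fun w hw => by
        obtain ⟨-, k, hk⟩ := S.hasNatWeight_of_mem_stdSet hw
        exact Submodule.mem_iSup_of_mem k hk.mem_eigenspace
    exact htop Submodule.mem_top
  have hQv : A.circ 0 (A.brstCurrent b c β γ) v
      ∈ ⨆ k : ℕ, (A.weightOp 𝒦 ℒ).eigenspace ((k : ℂ) + 2) := by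
    refine Submodule.iSup_induction _ (motive := fun w => A.circ 0 (A.brstCurrent b c β γ) w ∈ _)
      hv (fun k w hw => Submodule.mem_iSup_of_mem k ?_) (by simp) fun w w' h h' => ?_
    · convert S.isWeightVector_brstCurrent.circ_zero_mem_eigenspace hK hL hw using 2
      ring
    · rw [map_add]
      exact add_mem h h'
  have hx0 := Module.End.eq_zero_of_mem_eigenspace_of_mem_iSup
    (fun k => by norm_cast; omega) S.isWeightVector_cocycle.mem_eigenspace (hx ▸ hQv)
  apply hone
  simpa [hx0] using S.circ_one_β_cocycle.symm

end IsGhostSystem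

end VA

theorem stmt13_general (V : Type) [AddCommGroup V] [Module ℂ V] (A : VA V)
    (b c β γ : V)
    (hb : b ∈ A.odd) (hc : c ∈ A.odd)
    (hbc0 : A.circ 0 b c = A.one) (hbc : ∀ n : ℤ, 1 ≤ n → A.circ n b c = 0)
    (hcb0 : A.circ 0 c b = A.one) (hcb : ∀ n : ℤ, 1 ≤ n → A.circ n c b = 0)
    (hbb : ∀ n : ℤ, 0 ≤ n → A.circ n b b = 0)
    (hcc : ∀ n : ℤ, 0 ≤ n → A.circ n c c = 0)
    (hβ : β ∈ A.even) (hγ : γ ∈ A.even)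
    (hβγ0 : A.circ 0 β γ = A.one) (hβγ : ∀ n : ℤ, 1 ≤ n → A.circ n β γ = 0)
    (hγβ0 : A.circ 0 γ β = -A.one) (hγβ : ∀ n : ℤ, 1 ≤ n → A.circ n γ β = 0)
    (hββ : ∀ n : ℤ, 0 ≤ n → A.circ n β β = 0)
    (hγγ : ∀ n : ℤ, 0 ≤ n → A.circ n γ γ = 0)
    (hcross : ∀ n : ℤ, 0 ≤ n →
      A.circ n b β = 0 ∧ A.circ n b γ = 0 ∧ A.circ n c β = 0 ∧ A.circ n c γ = 0 ∧
      A.circ n β b = 0 ∧ A.circ n γ b = 0 ∧ A.circ n β c = 0 ∧ A.circ n γ c = 0)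
    (LS LE J : V)
    (hLS : LS = A.wick (A.D β) γ + (2 : ℂ) • A.wick β (A.D γ))
    (hLE : LE = -(A.wick (A.D b) c) - (2 : ℂ) • A.wick b (A.D c))
    (hJ : J = A.wick (LS + (1 / 2 : ℂ) • LE) c + (3 / 4 : ℂ) • A.D (A.D c))
    (hspan : Submodule.span ℂ (VA.StdSet A b c β γ) = ⊤)
    (hli : LinearIndependent ℂ (fun v : VA.StdSet A b c β γ => (v : V)))
    (x : V) (hx : x = A.wick β (A.wick γ γ) - A.wick b (A.wick c γ) + (3 / 2 : ℂ) • A.D γ)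
    :
    ∀ v : V, A.circ 0 J v ≠ x := by
  subst hLS hLE hJ hx
  open VA.HasSinglePole in
  have S : A.IsGhostSystem b c β γ :=
    { b_odd := hb, c_odd := hc, β_even := hβ, γ_even := hγ
      b_b := of_forall_eq_zero hbb
      c_b := of_residue (by rw [hcb0, one_smul]) hcb
      β_b := of_forall_eq_zero fun n hn => (hcross n hn).2.2.2.2.1
      γ_b := of_forall_eq_zero fun n hn => (hcross n hn).2.2.2.2.2.1
      b_c := of_residue (by rw [hbc0, one_smul]) hbc
      c_c := of_forall_eq_zero hcc
      β_c := of_forall_eq_zero fun n hn => (hcross n hn).2.2.2.2.2.2.1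
      γ_c := of_forall_eq_zero fun n hn => (hcross n hn).2.2.2.2.2.2.2
      b_β := of_forall_eq_zero fun n hn => (hcross n hn).1
      c_β := of_forall_eq_zero fun n hn => (hcross n hn).2.2.1
      β_β := of_forall_eq_zero hββ
      γ_β := of_residue (by rw [hγβ0, neg_one_smul]) hγβ
      b_γ := of_forall_eq_zero fun n hn => (hcross n hn).2.1
      c_γ := of_forall_eq_zero fun n hn => (hcross n hn).2.2.2.1
      β_γ := of_residue (by rw [hβγ0, one_smul]) hβγ
      γ_γ := of_forall_eq_zero hγγ }
  have hone : A.one ≠ 0 := hli.ne_zero ⟨A.one, [], [], [], [], .nil, .nil, .nil, .nil, rfl⟩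
  exact S.circ_zero_brstCurrent_ne hspan hone

/-- The cocycle `x = :βγ²: - :bcγ: + (3/2)∂γ` is not a BRST
coboundary (here the standard monomials form a basis of `𝒲`, which is expressed by the
span and linear-independence hypotheses). -/
theorem stmt13 (V : Type) [AddCommGroup V] [Module ℂ V] (A : VA V)
    (b c β γ : V)
    (hb : b ∈ A.odd) (hc : c ∈ A.odd)
    (hbc0 : A.circ 0 b c = A.one) (hbc : ∀ n : ℤ, 1 ≤ n → A.circ n b c = 0)
    (hcb0 : A.circ 0 c b = A.one) (hcb : ∀ n : ℤ, 1 ≤ n → A.circ n c b = 0)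
    (hbb : ∀ n : ℤ, 0 ≤ n → A.circ n b b = 0)
    (hcc : ∀ n : ℤ, 0 ≤ n → A.circ n c c = 0)
    (hβ : β ∈ A.even) (hγ : γ ∈ A.even)
    (hβγ0 : A.circ 0 β γ = A.one) (hβγ : ∀ n : ℤ, 1 ≤ n → A.circ n β γ = 0)
    (hγβ0 : A.circ 0 γ β = -A.one) (hγβ : ∀ n : ℤ, 1 ≤ n → A.circ n γ β = 0)
    (hββ : ∀ n : ℤ, 0 ≤ n → A.circ n β β = 0)
    (hγγ : ∀ n : ℤ, 0 ≤ n → A.circ n γ γ = 0)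
    (hcross : ∀ n : ℤ, 0 ≤ n →
      A.circ n b β = 0 ∧ A.circ n b γ = 0 ∧ A.circ n c β = 0 ∧ A.circ n c γ = 0 ∧
      A.circ n β b = 0 ∧ A.circ n γ b = 0 ∧ A.circ n β c = 0 ∧ A.circ n γ c = 0)
    (LS LE LW J : V)
    (hLS : LS = A.wick (A.D β) γ + (2 : ℂ) • A.wick β (A.D γ))
    (hLE : LE = -(A.wick (A.D b) c) - (2 : ℂ) • A.wick b (A.D c))
    (hLW : LW = LE + LS)
    (hJ : J = A.wick (LS + (1 / 2 : ℂ) • LE) c + (3 / 4 : ℂ) • A.D (A.D c))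
    (hspan : Submodule.span ℂ (VA.StdSet A b c β γ) = ⊤)
    (hli : LinearIndependent ℂ (fun v : VA.StdSet A b c β γ => (v : V)))
    (x : V) (hx : x = A.wick β (A.wick γ γ) - A.wick b (A.wick c γ) + (3 / 2 : ℂ) • A.D γ)
    :
    ∀ v : V, A.circ 0 J v ≠ x :=
  stmt13_general V A b c β γ hb hc hbc0 hbc hcb0 hcb hbb hcc hβ hγ hβγ0 hβγ hγβ0 hγβ hββ hγγ hcross
    LS LE J hLS hLE hJ hspan hli x hx
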